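/- For every index j ∈ {1,…,P} and every real s′ with s′ ≠ s^e_k for all k ≠ j, the deviator's trip cost C′ in the deviated profile satisfies ρ ≤ C′ + m(1+γ)/μ. Consequently, the equilibrium profile s^e is an ε-Nash equilibrium of the departure time choice game for every ε ≥ m(1+γ)/μ: no user can lower their trip cost (which equals ρ at s^e) by more than m(1+γ)/μ by unilaterally changing their departure time. -/

import Mathlib

/-!
The deviator's trip cost is at least the schedule delay `V(s')` of their own departure time, and
`V(s') ≥ ρ` as soon as `s' ∉ (t⁻, t⁺)`. For `s' ∈ (t⁻, t⁺)` every departure of the deviated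
profile is at least `t⁻`, so the deviator at position `o'` arrives no earlier than the equilibrium
user at `o'`; counting the departures before `s'` shows that `s'` is at most one equilibrium gap
`m (1 + γ) / μ` later than `s^e_{o'}`. Since `β < 1` the trip cost is nondecreasing in the arrival
time, so the deviator pays at least `ρ - m (1 + γ) / μ`, while every equilibrium user pays `ρ`.
-/

/-- Schedule delay cost function `V(d) = β·max(−d,0) + γ·max(d,0)`. -/
noncomputable def sdc (β γ d : ℝ) : ℝ := β * max (-d) 0 + γ * max d 0

/-- Destination arrival times: `d 0 = s 0`, `d (k+1) = max (d k + m/μ) (s (k+1))`. -/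
noncomputable def arr (m μ : ℝ) (s : ℕ → ℝ) : ℕ → ℝ
  | 0 => s 0
  | k + 1 => max (arr m μ s k + m / μ) (s (k + 1))

/-- Trip cost of the `k`-th departing user. -/
noncomputable def cost (β γ m μ : ℝ) (s : ℕ → ℝ) (k : ℕ) : ℝ :=
  (arr m μ s k - s k) + sdc β γ (arr m μ s k)

/-- A time profile: strictly increasing departure times (0-indexed, users `0,…,P-1`). -/
def IsProfile (P : ℕ) (s : ℕ → ℝ) : Prop := ∀ i, i + 1 < P → s i < s (i + 1)

/-- Equilibrium departure time of the first user. -/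
noncomputable def tminus (P : ℕ) (m μ β γ : ℝ) : ℝ :=
  -(m * ((P : ℝ) - 1) / μ) * (γ / (β + γ))

/-- Equilibrium departure time of the last user. -/
noncomputable def tplus (P : ℕ) (m μ β γ : ℝ) : ℝ :=
  tminus P m μ β γ + m * ((P : ℝ) - 1) / μ

/-- Equilibrium trip cost. -/
noncomputable def rho (P : ℕ) (m μ β γ : ℝ) : ℝ :=
  (m * ((P : ℝ) - 1) / μ) * (β * γ / (β + γ))

/-- The equilibrium profile `s^e` (0-indexed: index `k` is the `(k+1)`-st departing user). -/
noncomputable def se (P : ℕ) (m μ β γ : ℝ) (k : ℕ) : ℝ :=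
  if (k : ℤ) ≤ ⌊γ * ((P : ℝ) - 1) / (β + γ)⌋ then
    tminus P m μ β γ + (m * (1 - β) / μ) * (k : ℝ)
  else
    tminus P m μ β γ + (m * (1 + γ) / μ) * (k : ℝ) - m * γ * ((P : ℝ) - 1) / μ

section ScheduleDelay

variable {β γ : ℝ}

lemma sdc_of_nonpos {d : ℝ} (hd : d ≤ 0) : sdc β γ d = β * -d := by
  simp [sdc, hd]

lemma sdc_of_nonneg {d : ℝ} (hd : 0 ≤ d) : sdc β γ d = γ * d := by
  simp [sdc, hd]

lemma sdc_le_add_mul_sub (hβ : 0 ≤ β) (hγ : 0 ≤ γ) {a b : ℝ} (hab : a ≤ b) :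
    sdc β γ a ≤ sdc β γ b + β * (b - a) := by
  have hearly : max (-a) 0 ≤ max (-b) 0 + (b - a) :=
    max_le (by linarith [le_max_left (-b) 0]) (by linarith [le_max_right (-b) 0])
  have hlate : max a 0 ≤ max b 0 := max_le_max_right 0 hab
  unfold sdc
  linarith [mul_le_mul_of_nonneg_left hearly hβ, mul_le_mul_of_nonneg_left hlate hγ]

noncomputable def tripCost (β γ s d : ℝ) : ℝ := (d - s) + sdc β γ d

lemma tripCost_monotone (hβ : 0 ≤ β) (hβ1 : β ≤ 1) (hγ : 0 ≤ γ) (s : ℝ) :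
    Monotone (tripCost β γ s) := fun a b hab => by
  have := sdc_le_add_mul_sub hβ hγ hab
  unfold tripCost
  nlinarith

lemma sdc_le_tripCost (hβ : 0 ≤ β) (hβ1 : β ≤ 1) (hγ : 0 ≤ γ) {s d : ℝ} (hsd : s ≤ d) :
    sdc β γ s ≤ tripCost β γ s d := by
  simpa [tripCost] using tripCost_monotone hβ hβ1 hγ s hsd

lemma cost_eq_tripCost (m μ : ℝ) (s : ℕ → ℝ) (k : ℕ) :
    cost β γ m μ s k = tripCost β γ (s k) (arr m μ s k) := rfl

end ScheduleDelay

section Arrival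

variable {m μ : ℝ} {s : ℕ → ℝ}

lemma le_arr (k : ℕ) : s k ≤ arr m μ s k := by
  cases k with
  | zero => exact le_rfl
  | succ k => exact le_max_right _ _

lemma add_mul_le_arr (k : ℕ) : s 0 + k * (m / μ) ≤ arr m μ s k := by
  induction k with
  | zero => simp [arr]
  | succ k ih =>
    have hstep : arr m μ s k + m / μ ≤ arr m μ s (k + 1) := le_max_left _ _
    push_cast
    linarith

lemma arr_eq_of_le {n : ℕ} (hs : ∀ k < n, s k ≤ s 0 + k * (m / μ)) :
    ∀ k < n, arr m μ s k = s 0 + k * (m / μ) := by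
  intro k
  induction k with
  | zero => simp [arr]
  | succ k ih =>
    intro hk
    have hsk := hs (k + 1) hk
    push_cast at hsk
    rw [arr, ih (by omega), max_eq_left (by linarith)]
    push_cast
    ring

end Arrival

lemma IsProfile.strictMonoOn {P : ℕ} {s : ℕ → ℝ} (hs : IsProfile P s) :
    StrictMonoOn s (Set.Iio P) := fun a ha b hb hab =>
  strictMonoOn_Iic_of_lt_succ (n := P - 1) (fun i hi => hs i (by omega))
    (by simp only [Set.mem_Iic, Set.mem_Iio] at ha ⊢; omega)
    (by simp only [Set.mem_Iic, Set.mem_Iio] at hb ⊢; omega) hab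

section Counting

open Multiset

variable {α : Type*} [LinearOrder α] {P : ℕ}

lemma countP_map_range_lt_of_strictMonoOn {f : ℕ → α} (hf : StrictMonoOn f (Set.Iio P))
    {o : ℕ} (ho : o < P) : ((Finset.range P).val.map f).countP (· < f o) = o := by
  have : (Finset.range P).filter (fun i => f i < f o) = Finset.range o := by
    ext i
    simp only [Finset.mem_filter, Finset.mem_range]
    constructor
    · rintro ⟨hi, hlt⟩
      exact (hf.lt_iff_lt hi ho).1 hlt
    · intro hi
      exact ⟨hi.trans ho, hf (hi.trans ho) ho hi⟩
  rw [countP_map, ← Finset.filter_val, this, Finset.card_val, Finset.card_range]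

lemma lt_countP_map_range_lt_of_monotone {g : ℕ → α} (hg : Monotone g) {k : ℕ} (hk : k < P)
    {x : α} (hx : g k < x) : k < ((Finset.range P).val.map g).countP (· < x) := by
  rw [countP_map, ← Finset.filter_val, Finset.card_val]
  calc k < (Finset.range (k + 1)).card := by simp
    _ ≤ _ := Finset.card_le_card fun i hi => by
      simp only [Finset.mem_range, Finset.mem_filter] at hi ⊢
      exact ⟨by omega, (hg (by omega)).trans_lt hx⟩

/-- After replacing `g j` by `x` in the monotone profile `g`, the new time `x` at sorted
position `o` lies below the old time at position `o + 1`. -/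
lemma le_of_map_eq_cons_erase {f g : ℕ → α} (hf : StrictMonoOn f (Set.Iio P)) (hg : Monotone g)
    {j o : ℕ} (hj : j < P) (ho : o + 1 < P) {x : α} (hfo : f o = x)
    (hfg : (Finset.range P).val.map f = x ::ₘ ((Finset.range P).val.map g).erase (g j)) :
    x ≤ g (o + 1) := by
  by_contra! hlt
  have hmem : g j ∈ (Finset.range P).val.map g := mem_map.2 ⟨j, by simpa using hj, rfl⟩
  have hcount := congrArg (countP (· < x)) hfg
  rw [← hfo, countP_map_range_lt_of_strictMonoOn hf (by omega), hfo,
    countP_cons_of_neg (p := (· < x)) _ (lt_irrefl x)] at hcount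
  have := lt_countP_map_range_lt_of_monotone hg ho hlt
  rw [← cons_erase hmem, countP_cons] at this
  split_ifs at this <;> omega

end Counting

section Equilibrium

variable {P : ℕ} {m μ β γ : ℝ}

/-- The two branches of `se` are the lines of slopes `1 - β` and `1 + γ` (in units of `m / μ`)
through `t⁻` and `t⁺`; they cross at `γ (P - 1) / (β + γ)`, so `se` is their maximum. -/
lemma se_eq_max (hβγ : 0 < β + γ) (k : ℕ) :
    se P m μ β γ k =
      tminus P m μ β γ + m / μ * max ((1 - β) * k) ((1 + γ) * k - γ * (P - 1)) := by
  have hfloor : (k : ℤ) ≤ ⌊γ * ((P : ℝ) - 1) / (β + γ)⌋ ↔ (k : ℝ) * (β + γ) ≤ γ * (P - 1) := by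
    rw [Int.le_floor, Int.cast_natCast, le_div_iff₀ hβγ]
  unfold se
  split_ifs with hk
  · rw [max_eq_left (by nlinarith [hfloor.1 hk])]
    ring
  · rw [max_eq_right (by nlinarith [hfloor.not.1 hk])]
    ring

lemma se_zero (hβγ : 0 < β + γ) (hγ : 0 ≤ γ) (hP : 1 ≤ P) :
    se P m μ β γ 0 = tminus P m μ β γ := by
  have : (1 : ℝ) ≤ P := by exact_mod_cast hP
  rw [se_eq_max hβγ, max_eq_left (by push_cast; nlinarith)]
  simp

lemma se_monotone (hm : 0 ≤ m) (hμ : 0 ≤ μ) (hβγ : 0 < β + γ) (hβ1 : β ≤ 1) (hγ : 0 ≤ γ) :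
    Monotone (se P m μ β γ) := fun a b hab => by
  have hab' : (a : ℝ) ≤ b := by exact_mod_cast hab
  rw [se_eq_max hβγ, se_eq_max hβγ]
  gcongr

lemma se_succ_le (hβγ : 0 < β + γ) (hm : 0 ≤ m) (hμ : 0 ≤ μ) (k : ℕ) :
    se P m μ β γ (k + 1) ≤ se P m μ β γ k + m * (1 + γ) / μ := by
  rw [se_eq_max hβγ, se_eq_max hβγ]
  have hstep : max ((1 - β) * (k + 1 : ℕ)) ((1 + γ) * (k + 1 : ℕ) - γ * (P - 1))
      ≤ max ((1 - β) * k) ((1 + γ) * k - γ * (P - 1)) + (1 + γ) := by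
    push_cast
    refine max_le ?_ ?_ <;> nlinarith [le_max_left ((1 - β) * k) ((1 + γ) * k - γ * (P - 1)),
      le_max_right ((1 - β) * k) ((1 + γ) * k - γ * (P - 1))]
  calc _ ≤ tminus P m μ β γ + m / μ * (max ((1 - β) * k) ((1 + γ) * k - γ * (P - 1)) + (1 + γ)) :=
        by gcongr
    _ = _ := by ring

lemma se_sub_one (hβγ : 0 < β + γ) (hβ : 0 ≤ β) (hP : 1 ≤ P) :
    se P m μ β γ (P - 1) = tplus P m μ β γ := by
  have hP' : (1 : ℝ) ≤ P := by exact_mod_cast hP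
  rw [se_eq_max hβγ, Nat.cast_sub hP, max_eq_right (by push_cast; nlinarith), tplus]
  push_cast
  ring

lemma arr_se (hβγ : 0 < β + γ) (hm : 0 ≤ m) (hμ : 0 ≤ μ) (hβ : 0 ≤ β) (hγ : 0 ≤ γ) (hP : 1 ≤ P)
    {k : ℕ} (hk : k < P) :
    arr m μ (se P m μ β γ) k = tminus P m μ β γ + k * (m / μ) := by
  rw [arr_eq_of_le (n := P) (fun i hi => ?_) k hk, se_zero hβγ hγ hP]
  have hi' : (i : ℝ) + 1 ≤ P := by exact_mod_cast hi
  rw [se_zero hβγ hγ hP, se_eq_max hβγ, mul_comm (i : ℝ)]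
  gcongr
  exact max_le (by nlinarith) (by nlinarith)

lemma cost_se (hβγ : 0 < β + γ) (hm : 0 ≤ m) (hμ : 0 < μ) (hβ : 0 ≤ β) (hγ : 0 ≤ γ)
    (hP : 1 ≤ P) {k : ℕ} (hk : k < P) :
    cost β γ m μ (se P m μ β γ) k = rho P m μ β γ := by
  have hmμ : 0 ≤ m / μ := div_nonneg hm hμ.le
  have hcross : tminus P m μ β γ + k * (m / μ) = m / μ * (k - γ * (P - 1) / (β + γ)) := by
    unfold tminus; ring
  rw [cost_eq_tripCost, arr_se hβγ hm hμ.le hβ hγ hP hk, se_eq_max hβγ, tripCost, hcross]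
  rcases le_total (k : ℝ) (γ * (P - 1) / (β + γ)) with hle | hge
  · have hle' : (k : ℝ) * (β + γ) ≤ γ * (P - 1) := (le_div_iff₀ hβγ).1 hle
    rw [max_eq_left (by nlinarith), sdc_of_nonpos (mul_nonpos_of_nonneg_of_nonpos hmμ
      (by linarith)), rho, tminus]
    field_simp
    ring
  · have hge' : γ * (P - 1) ≤ (k : ℝ) * (β + γ) := (div_le_iff₀ hβγ).1 hge
    rw [max_eq_right (by nlinarith), sdc_of_nonneg (mul_nonneg hmμ (by linarith)), rho, tminus]
    field_simp
    ring

lemma rho_eq_mul_neg_tminus (hβγ : β + γ ≠ 0) : rho P m μ β γ = β * -tminus P m μ β γ := by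
  unfold rho tminus
  field_simp

lemma rho_eq_mul_tplus (hβγ : β + γ ≠ 0) : rho P m μ β γ = γ * tplus P m μ β γ := by
  unfold rho tplus tminus
  field_simp
  ring

lemma rho_le_sdc_of_notMem_Ioo (hm : 0 ≤ m) (hμ : 0 ≤ μ) (hβ : 0 ≤ β) (hγ : 0 ≤ γ)
    (hβγ : 0 < β + γ) (hP : 1 ≤ P) {s : ℝ} (hs : s ∉ Set.Ioo (tminus P m μ β γ) (tplus P m μ β γ)) :
    rho P m μ β γ ≤ sdc β γ s := by
  have hlen : 0 ≤ m * ((P : ℝ) - 1) / μ :=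
    div_nonneg (mul_nonneg hm (by simpa using (Nat.one_le_cast (α := ℝ)).2 hP)) hμ
  have htminus : tminus P m μ β γ ≤ 0 := by
    unfold tminus
    have := mul_nonneg hlen (div_nonneg hγ hβγ.le)
    linarith
  have htplus : 0 ≤ tplus P m μ β γ := by
    have : tplus P m μ β γ = m * ((P : ℝ) - 1) / μ * (β / (β + γ)) := by
      unfold tplus tminus
      field_simp
      ring
    rw [this]
    exact mul_nonneg hlen (div_nonneg hβ hβγ.le)
  rw [Set.mem_Ioo, not_and_or, not_lt, not_lt] at hs
  rcases hs with hearly | hlate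
  · rw [rho_eq_mul_neg_tminus hβγ.ne', sdc_of_nonpos (hearly.trans htminus)]
    nlinarith
  · rw [rho_eq_mul_tplus hβγ.ne', sdc_of_nonneg (htplus.trans hlate)]
    nlinarith

end Equilibrium

lemma rho_le_cost_add_of_mem_Ioo {P : ℕ} {m μ β γ : ℝ} (hm : 0 ≤ m) (hμ : 0 < μ) (hβ : 0 ≤ β)
    (hβ1 : β ≤ 1) (hγ : 0 ≤ γ) (hβγ : 0 < β + γ) {j : ℕ} (hj : j < P) {s' : ℝ}
    (hs' : s' ∈ Set.Ioo (tminus P m μ β γ) (tplus P m μ β γ))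
    {sd : ℕ → ℝ} (hsd : IsProfile P sd)
    (hmult : Multiset.map sd (Finset.range P).val =
      s' ::ₘ (Multiset.map (se P m μ β γ) (Finset.range P).val).erase (se P m μ β γ j))
    {o' : ℕ} (ho' : o' < P) (hso' : sd o' = s') :
    rho P m μ β γ ≤ cost β γ m μ sd o' + m * (1 + γ) / μ := by
  have hP : 1 ≤ P := by omega
  have hse := se_monotone (P := P) hm hμ.le hβγ hβ1 hγ
  have hsd0 : tminus P m μ β γ ≤ sd 0 := by
    have hmem : sd 0 ∈ Multiset.map sd (Finset.range P).val :=
      Multiset.mem_map.2 ⟨0, Finset.mem_range.2 hP, rfl⟩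
    rw [hmult] at hmem
    rcases Multiset.mem_cons.1 hmem with h | h
    · exact h ▸ hs'.1.le
    · obtain ⟨k, -, hk⟩ := Multiset.mem_map.1 (Multiset.mem_of_mem_erase h)
      exact hk ▸ se_zero hβγ hγ hP ▸ hse k.zero_le
  have harr : arr m μ (se P m μ β γ) o' ≤ arr m μ sd o' := by
    rw [arr_se hβγ hm hμ.le hβ hγ hP ho']
    linarith [add_mul_le_arr (m := m) (μ := μ) (s := sd) o']
  have hgap : 0 ≤ m * (1 + γ) / μ := div_nonneg (mul_nonneg hm (by linarith)) hμ.le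
  have hlate : s' ≤ se P m μ β γ o' + m * (1 + γ) / μ := by
    rcases Nat.lt_or_ge (o' + 1) P with hnext | hlast
    · exact (le_of_map_eq_cons_erase hsd.strictMonoOn hse hj hnext hso' hmult).trans
        (se_succ_le hβγ hm hμ.le o')
    · rw [show o' = P - 1 by omega, se_sub_one hβγ hβ hP]
      linarith [hs'.2]
  calc rho P m μ β γ
      = tripCost β γ (se P m μ β γ o') (arr m μ (se P m μ β γ) o') :=
        (cost_se hβγ hm hμ hβ hγ hP ho').symm
    _ = tripCost β γ s' (arr m μ (se P m μ β γ) o') + (s' - se P m μ β γ o') := by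
        unfold tripCost
        ring
    _ ≤ tripCost β γ s' (arr m μ sd o') + m * (1 + γ) / μ := by
        linarith [tripCost_monotone hβ hβ1 hγ s' harr]
    _ = cost β γ m μ sd o' + m * (1 + γ) / μ := by rw [cost_eq_tripCost, hso']

theorem epsilon_nash_equilibrium_general (P : ℕ) (m μ β γ : ℝ)
    (hm : 0 < m) (hμ : 0 < μ)
    (hβ : 0 < β) (hβ1 : β < 1) (hγ : 0 < γ)
    (j : ℕ) (hj : j < P) (s' : ℝ)
    (sd : ℕ → ℝ) (hsd : IsProfile P sd)
    (hmult : Multiset.map sd (Finset.range P).val =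
      s' ::ₘ (Multiset.map (se P m μ β γ) (Finset.range P).val).erase (se P m μ β γ j))
    (o' : ℕ) (ho' : o' < P) (hso' : sd o' = s') :
    rho P m μ β γ ≤ cost β γ m μ sd o' + m * (1 + γ) / μ ∧
    ∀ ε : ℝ, m * (1 + γ) / μ ≤ ε →
      cost β γ m μ (se P m μ β γ) j ≤ cost β γ m μ sd o' + ε := by
  have hβγ : 0 < β + γ := by linarith
  have hP : 1 ≤ P := by omega
  have hdev : rho P m μ β γ ≤ cost β γ m μ sd o' + m * (1 + γ) / μ := by
    by_cases hmid : s' ∈ Set.Ioo (tminus P m μ β γ) (tplus P m μ β γ)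
    · exact rho_le_cost_add_of_mem_Ioo hm.le hμ hβ.le hβ1.le hγ.le hβγ hj hmid hsd hmult ho' hso'
    · have hsdc := sdc_le_tripCost hβ.le hβ1.le hγ.le (hso' ▸ le_arr (m := m) (μ := μ) (s := sd) o')
      have hgap : 0 < m * (1 + γ) / μ := by positivity
      rw [cost_eq_tripCost, hso']
      linarith [rho_le_sdc_of_notMem_Ioo hm.le hμ.le hβ.le hγ.le hβγ hP hmid]
  refine ⟨hdev, fun ε hε => ?_⟩
  rw [cost_se hβγ hm.le hμ hβ.le hγ.le hP hj]
  linarith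

theorem epsilon_nash_equilibrium (P : ℕ) (hP : 2 ≤ P) (m μ β γ : ℝ)
    (hm : 0 < m) (hm1 : m ≤ 1) (hμ : 0 < μ)
    (hβ : 0 < β) (hβ1 : β < 1) (hγ : 0 < γ)
    (j : ℕ) (hj : j < P) (s' : ℝ)
    (hs' : ∀ k, k < P → k ≠ j → s' ≠ se P m μ β γ k)
    (sd : ℕ → ℝ) (hsd : IsProfile P sd)
    (hmult : Multiset.map sd (Finset.range P).val =
      s' ::ₘ (Multiset.map (se P m μ β γ) (Finset.range P).val).erase (se P m μ β γ j))
    (o' : ℕ) (ho' : o' < P) (hso' : sd o' = s') :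
    rho P m μ β γ ≤ cost β γ m μ sd o' + m * (1 + γ) / μ ∧
    ∀ ε : ℝ, m * (1 + γ) / μ ≤ ε →
      cost β γ m μ (se P m μ β γ) j ≤ cost β γ m μ sd o' + ε :=
  epsilon_nash_equilibrium_general P m μ β γ hm hμ hβ hβ1 hγ j hj s' sd hsd hmult o' ho' hso'
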